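/- Let V₀ be an arbitrary smooth real-valued function on (0,∞) and d₉ a real constant. Let H = −(ħ²/2)Δ + V₀(r) + (d₉ − V₀(r))K + (1/2)(σ₁,p)(σ₂,p) and Y₃₀ = (1/2)(σ₁+σ₂, p). Then the quadratic operator identity (Y₃₀)² = (1/4)(H − d₉)(K + 3) holds, where d₉ denotes d₉ times the identity operator. -/

import Mathlib

noncomputable section

open scoped BigOperators

/-- The spinor space `ℂ⁴ = ℂ² ⊗ ℂ²`, realized as functions on `Fin 2 × Fin 2`. -/
abbrev Spinor : Type := Fin 2 × Fin 2 → ℂ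

/-- Wave functions on `ℝ³` (in the statements they are restricted to functions
that are smooth away from the origin). -/
abbrev WaveFn : Type := (Fin 3 → ℝ) → Spinor

/-- Operators: `ℂ`-linear combinations and compositions are formed pointwise. -/
abbrev Op : Type := WaveFn → WaveFn

/-- The commutator `[A,B] = AB − BA`. -/
def opComm (A B : Op) : Op := fun ψ => A (B ψ) - B (A ψ)

/-- The identity operator. -/
def idOp : Op := fun ψ => ψ

/-- The Euclidean norm `r = |x|`. -/
def rfun (x : Fin 3 → ℝ) : ℝ := Real.sqrt (∑ k, x k ^ 2)

/-- Multiplication by a radial function `f(r)`. -/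
def mulR (f : ℝ → ℝ) : Op := fun ψ x => (f (rfun x) : ℂ) • ψ x

/-- The position operator `x_k` (multiplication by the k-th coordinate). -/
def xOp (k : Fin 3) : Op := fun ψ x => (x k : ℂ) • ψ x

/-- The momentum operator `p_k = -ihbar ∂/∂x_k`. -/
def pOp (hbar : ℝ) (k : Fin 3) : Op :=
  fun ψ x => (-(Complex.I * (hbar : ℂ))) • fderiv ℝ ψ x (Pi.single k 1)

/-- The Laplacian `Δ = Σ_k ∂²/∂x_k²`. -/
def lap : Op :=
  fun ψ x => ∑ k, fderiv ℝ (fun y => fderiv ℝ ψ y (Pi.single k 1)) x (Pi.single k 1)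

/-- The totally antisymmetric Levi-Civita symbol `ε_{ijk}` on `Fin 3`. -/
def eps (i j k : Fin 3) : ℂ :=
  ((j.1 : ℂ) - (i.1 : ℂ)) * ((k.1 : ℂ) - (i.1 : ℂ)) * ((k.1 : ℂ) - (j.1 : ℂ)) / 2

/-- The standard Pauli matrices `σ¹, σ², σ³`. -/
def pauli : Fin 3 → Matrix (Fin 2) (Fin 2) ℂ :=
  ![!![0, 1; 1, 0], !![0, -Complex.I; Complex.I, 0], !![1, 0; 0, -1]]

/-- `(σ₁)_k = σ^k ⊗ I₂`, acting on the first tensor factor. -/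
def sigma1 (k : Fin 3) : Op := fun ψ x ab => ∑ j, pauli k ab.1 j * ψ x (j, ab.2)

/-- `(σ₂)_k = I₂ ⊗ σ^k`, acting on the second tensor factor. -/
def sigma2 (k : Fin 3) : Op := fun ψ x ab => ∑ j, pauli k ab.2 j * ψ x (ab.1, j)

/-- Dot product of triples of operators: `(A,B) = Σ_k A_k B_k`. -/
def dot (A B : Fin 3 → Op) : Op := ∑ k, A k ∘ B k

/-- Cross product of triples of operators: `(A×B)_k = ε_{klm} A_l B_m`. -/
def cross (A B : Fin 3 → Op) (k : Fin 3) : Op := ∑ l, ∑ m, eps k l m • (A l ∘ B m)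

/-- The angular momentum `L_k = ε_{klm} x_l p_m`. -/
def LOp (hbar : ℝ) (k : Fin 3) : Op := ∑ l, ∑ m, eps k l m • (xOp l ∘ pOp hbar m)

/-- The spin-exchange operator `K = (σ₁,σ₂)`. -/
def KOp : Op := dot sigma1 sigma2

/-- `σ₁ + σ₂` componentwise. -/
def sigmaSum (k : Fin 3) : Op := sigma1 k + sigma2 k

/-- `σ₁ − σ₂` componentwise. -/
def sigmaDiff (k : Fin 3) : Op := sigma1 k - sigma2 k

/-- The general rotationally invariant two-spin Hamiltonian
`H = −(hbar²/2)Δ + V₀(r) + ½V₁(r)(σ₁+σ₂,L) + V₂(r)K + V₃(r)(x,σ₁)(x,σ₂)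
    + V₄(r)(σ₁,p)(σ₂,p) + ½V₅(r)[(σ₁,L)(σ₂,L)+(σ₂,L)(σ₁,L)]`. -/
def Ham (hbar : ℝ) (V₀ V₁ V₂ V₃ V₄ V₅ : ℝ → ℝ) : Op :=
  (-(hbar ^ 2 / 2) : ℂ) • lap + mulR V₀
    + ((1 : ℂ)/2) • (mulR V₁ ∘ dot sigmaSum (LOp hbar))
    + mulR V₂ ∘ KOp
    + mulR V₃ ∘ (dot xOp sigma1 ∘ dot xOp sigma2)
    + mulR V₄ ∘ (dot sigma1 (pOp hbar) ∘ dot sigma2 (pOp hbar))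
    + ((1 : ℂ)/2) • (mulR V₅ ∘ (dot sigma1 (LOp hbar) ∘ dot sigma2 (LOp hbar)
        + dot sigma2 (LOp hbar) ∘ dot sigma1 (LOp hbar)))

/-! With `S = σ₁ + σ₂`, `K = (σ₁,σ₂)` and the swap `P` of the two spin factors, Dirac's identity
`K = 2P − 1` gives `K(K + 3) = K + 3`, and since `S` annihilates the antisymmetric (singlet)
spinors, `S(K + 3) = 4S`. Hence `Y₃₀²(K + 3) = 4Y₃₀²`, while the potential part
`V₀ + (d₉ − V₀)K − d₉` of `H − d₉` vanishes on the range of `K + 3`. Finally, symmetry of second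
derivatives and the Pauli anticommutation relations give `Y₃₀² = ½p² + ½(σ₁,p)(σ₂,p)`, which is
the kinetic part of `H`. -/

open Matrix
open scoped Kronecker

abbrev SpinMatrix : Type := Matrix (Fin 2 × Fin 2) (Fin 2 × Fin 2) ℂ

def spinTotal (k : Fin 3) : SpinMatrix := pauli k ⊗ₖ 1 + 1 ⊗ₖ pauli k

def spinExchange : SpinMatrix := ∑ k, pauli k ⊗ₖ pauli k

def spinSwap : SpinMatrix := of fun i j => if i = j.swap then 1 else 0

lemma pauli_mul_add_pauli_mul (k l : Fin 3) :
    pauli k * pauli l + pauli l * pauli k = (if k = l then 2 else 0 : ℂ) • 1 := by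
  fin_cases k <;> fin_cases l <;> ext i j <;> fin_cases i <;> fin_cases j <;>
    simp [pauli] <;> norm_num

lemma spinTotal_mul_add_spinTotal_mul (k l : Fin 3) :
    spinTotal k * spinTotal l + spinTotal l * spinTotal k
      = (if k = l then 4 else 0 : ℂ) • 1
        + (2 : ℂ) • (pauli k ⊗ₖ pauli l + pauli l ⊗ₖ pauli k) := by
  simp only [spinTotal, add_mul, mul_add, ← mul_kronecker_mul, Matrix.mul_one, Matrix.one_mul]
  calc _ = (pauli k * pauli l + pauli l * pauli k) ⊗ₖ (1 : Matrix (Fin 2) (Fin 2) ℂ)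
        + (1 : Matrix (Fin 2) (Fin 2) ℂ) ⊗ₖ (pauli k * pauli l + pauli l * pauli k)
        + (2 : ℂ) • (pauli k ⊗ₖ pauli l + pauli l ⊗ₖ pauli k) := by
        rw [add_kronecker, kronecker_add]
        module
    _ = _ := by
        rw [pauli_mul_add_pauli_mul, smul_kronecker, kronecker_smul, one_kronecker_one]
        split_ifs <;> module

lemma spinExchange_eq_two_smul_spinSwap_sub_one : spinExchange = (2 : ℂ) • spinSwap - 1 := by
  ext ⟨a, b⟩ ⟨c, d⟩
  fin_cases a <;> fin_cases b <;> fin_cases c <;> fin_cases d <;>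
    simp [spinExchange, spinSwap, pauli, Fin.sum_univ_three, one_apply] <;> norm_num

lemma spinSwap_mul_self : spinSwap * spinSwap = 1 := by
  ext i j
  simp [spinSwap, mul_apply, one_apply]

lemma spinTotal_mul_spinSwap (k : Fin 3) : spinTotal k * spinSwap = spinTotal k := by
  ext ⟨a, b⟩ ⟨c, d⟩
  fin_cases k <;> fin_cases a <;> fin_cases b <;> fin_cases c <;> fin_cases d <;>
    simp [spinTotal, spinSwap, pauli, mul_apply, one_apply]

lemma spinExchange_add_three_smul_one :
    spinExchange + (3 : ℂ) • 1 = (2 : ℂ) • (spinSwap + 1) := by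
  rw [spinExchange_eq_two_smul_spinSwap_sub_one]
  module

lemma spinExchange_mul_spinExchange_add_three :
    spinExchange * (spinExchange + (3 : ℂ) • 1) = spinExchange + (3 : ℂ) • 1 := by
  rw [spinExchange_add_three_smul_one, spinExchange_eq_two_smul_spinSwap_sub_one]
  simp only [mul_smul_comm, smul_mul_assoc, sub_mul, mul_add, Matrix.mul_one, Matrix.one_mul,
    spinSwap_mul_self]
  module

lemma spinTotal_mul_spinExchange_add_three (k : Fin 3) :
    spinTotal k * (spinExchange + (3 : ℂ) • 1) = (4 : ℂ) • spinTotal k := by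
  rw [spinExchange_add_three_smul_one, mul_smul_comm, mul_add, spinTotal_mul_spinSwap,
    Matrix.mul_one]
  module

lemma sum_sum_mulVec_swap {n : Type*} [Fintype n] (M : Fin 3 → Fin 3 → Matrix n n ℂ)
    (Q : Fin 3 → Fin 3 → n → ℂ) (hQ : ∀ k l, Q k l = Q l k) :
    ∑ k, ∑ l, M l k *ᵥ Q k l = ∑ k, ∑ l, M k l *ᵥ Q k l := by
  rw [Finset.sum_comm]
  simp_rw [hQ]

lemma sum_spinTotal_mul_spinTotal_mulVec (Q : Fin 3 → Fin 3 → Spinor)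
    (hQ : ∀ k l, Q k l = Q l k) :
    ∑ k, ∑ l, (spinTotal k * spinTotal l) *ᵥ Q k l
      = (2 : ℂ) • (∑ k, Q k k + ∑ k, ∑ l, (pauli k ⊗ₖ pauli l) *ᵥ Q k l) := by
  calc _ = (1 / 2 : ℂ) • ∑ k, ∑ l,
        (spinTotal k * spinTotal l + spinTotal l * spinTotal k) *ᵥ Q k l := by
        simp only [add_mulVec, Finset.sum_add_distrib,
          sum_sum_mulVec_swap (fun k l => spinTotal k * spinTotal l) Q hQ]
        module
    _ = _ := by
        simp only [spinTotal_mul_add_spinTotal_mul, add_mulVec, smul_mulVec, one_mulVec,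
          Finset.sum_add_distrib, ← Finset.smul_sum,
          sum_sum_mulVec_swap (fun k l => pauli k ⊗ₖ pauli l) Q hQ]
        simp only [ite_smul, zero_smul, Finset.sum_ite_eq, Finset.mem_univ, if_true,
          ← Finset.smul_sum]
        module

def matOp (M : SpinMatrix) : Op := fun ψ x => M *ᵥ ψ x

lemma matOp_comp_matOp (M N : SpinMatrix) : matOp M ∘ matOp N = matOp (M * N) := by
  funext ψ x
  simp [matOp, mulVec_mulVec]

lemma sigma1_eq_matOp : sigma1 = fun k => matOp (pauli k ⊗ₖ 1) := by
  funext k ψ x ab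
  simp [sigma1, matOp, mulVec, dotProduct, Fintype.sum_prod_type, one_apply]

lemma sigma2_eq_matOp : sigma2 = fun k => matOp (1 ⊗ₖ pauli k) := by
  funext k ψ x ab
  simp [sigma2, matOp, mulVec, dotProduct, Fintype.sum_prod_type, one_apply]

lemma sigmaSum_eq_matOp : sigmaSum = fun k => matOp (spinTotal k) := by
  funext k ψ x
  simp [sigmaSum, sigma1_eq_matOp, sigma2_eq_matOp, spinTotal, matOp, add_mulVec]

lemma KOp_eq_matOp : KOp = matOp spinExchange := by
  funext ψ x
  simp [KOp, dot, sigma1_eq_matOp, sigma2_eq_matOp, matOp_comp_matOp, ← mul_kronecker_mul,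
    spinExchange, matOp, sum_mulVec, Finset.sum_apply]

lemma KOp_add_three_smul_idOp :
    KOp + (3 : ℂ) • idOp = matOp (spinExchange + (3 : ℂ) • 1) := by
  funext ψ x
  simp [KOp_eq_matOp, idOp, matOp, add_mulVec, smul_mulVec]

lemma smul_dot_matOp (c : ℂ) (A : Fin 3 → SpinMatrix) (P : Fin 3 → Op) :
    c • dot (fun k => matOp (A k)) P = dot (fun k => matOp (c • A k)) P := by
  funext ψ x
  simp [dot, matOp, Finset.smul_sum, Finset.sum_apply, smul_mulVec]

def mulVecCLM {n : Type*} [Fintype n] (M : Matrix n n ℂ) :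
    (n → ℂ) →L[ℝ] (n → ℂ) :=
  LinearMap.toContinuousLinearMap ((mulVecLin M).restrictScalars ℝ)

@[simp] lemma mulVecCLM_apply {n : Type*} [Fintype n] (M : Matrix n n ℂ)
    (v : n → ℂ) : mulVecCLM M v = M *ᵥ v := rfl

section SecondDerivatives

variable {E F : Type*} [NormedAddCommGroup E] [NormedSpace ℝ E]
  [NormedAddCommGroup F] [NormedSpace ℝ F] {f : E → F} {y : E}

lemma ContDiffAt.differentiableAt_fderiv (h : ContDiffAt ℝ 2 f y) :
    DifferentiableAt ℝ (fderiv ℝ f) y :=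
  (h.fderiv_right (m := 1) (by norm_num)).differentiableAt one_ne_zero

lemma fderiv_fderiv_apply (h : DifferentiableAt ℝ (fderiv ℝ f) y) (v w : E) :
    fderiv ℝ (fun z => fderiv ℝ f z v) y w = fderiv ℝ (fderiv ℝ f) y w v := by
  simp [fderiv_clm_apply h (differentiableAt_const v)]

end SecondDerivatives

section Momentum

variable {ψ : WaveFn} {x : Fin 3 → ℝ}

lemma HasFDerivAt.matOp {ψ' : (Fin 3 → ℝ) →L[ℝ] Spinor} (M : SpinMatrix)
    (h : HasFDerivAt ψ ψ' x) : HasFDerivAt (matOp M ψ) ((mulVecCLM M).comp ψ') x :=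
  (mulVecCLM M).hasFDerivAt.comp x h

lemma DifferentiableAt.matOp (M : SpinMatrix) (h : DifferentiableAt ℝ ψ x) :
    DifferentiableAt ℝ (matOp M ψ) x :=
  (h.hasFDerivAt.matOp M).differentiableAt

lemma ContDiffAt.matOp {n : WithTop ℕ∞} (M : SpinMatrix) (h : ContDiffAt ℝ n ψ x) :
    ContDiffAt ℝ n (matOp M ψ) x :=
  (mulVecCLM M).contDiff.contDiffAt.comp x h

lemma pOp_matOp (hbar : ℝ) (k : Fin 3) (M : SpinMatrix) (h : DifferentiableAt ℝ ψ x) :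
    pOp hbar k (matOp M ψ) x = M *ᵥ pOp hbar k ψ x := by
  simp only [pOp, (h.hasFDerivAt.matOp M).fderiv, ContinuousLinearMap.comp_apply,
    mulVecCLM_apply, mulVec_smul]

lemma pOp_sum (hbar : ℝ) (k : Fin 3) {ι : Type*} (s : Finset ι) (φ : ι → WaveFn)
    (h : ∀ i ∈ s, DifferentiableAt ℝ (φ i) x) :
    pOp hbar k (∑ i ∈ s, φ i) x = ∑ i ∈ s, pOp hbar k (φ i) x := by
  simp [pOp, fderiv_sum h, Finset.smul_sum]

lemma Filter.EventuallyEq.pOp_eq {φ χ : WaveFn} (hbar : ℝ) (k : Fin 3)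
    (h : φ =ᶠ[nhds x] χ) : pOp hbar k φ x = pOp hbar k χ x := by
  simp only [pOp, h.fderiv_eq]

lemma differentiableAt_pOp (hbar : ℝ) (k : Fin 3) (h : ContDiffAt ℝ 2 ψ x) :
    DifferentiableAt ℝ (pOp hbar k ψ) x :=
  (h.differentiableAt_fderiv.clm_apply (differentiableAt_const _)).const_smul
    (-(Complex.I * (hbar : ℂ)))

def momentumHessian (hbar : ℝ) (ψ : WaveFn) (x : Fin 3 → ℝ) (k l : Fin 3) : Spinor :=
  pOp hbar k (pOp hbar l ψ) x

lemma momentumHessian_eq (hbar : ℝ) (k l : Fin 3) (h : ContDiffAt ℝ 2 ψ x) :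
    momentumHessian hbar ψ x k l
      = (-(hbar : ℂ) ^ 2) • fderiv ℝ (fderiv ℝ ψ) x (Pi.single k 1) (Pi.single l 1) := by
  have hc : Complex.I * hbar * (Complex.I * hbar) = -(hbar : ℂ) ^ 2 := by
    ring_nf
    rw [Complex.I_sq]
    ring
  unfold momentumHessian pOp
  rw [fderiv_fun_const_smul (h.differentiableAt_fderiv.clm_apply (differentiableAt_const _))]
  simp [fderiv_fderiv_apply h.differentiableAt_fderiv, smul_smul, hc]

lemma momentumHessian_symm (hbar : ℝ) (k l : Fin 3) (h : ContDiffAt ℝ 2 ψ x) :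
    momentumHessian hbar ψ x k l = momentumHessian hbar ψ x l k := by
  rw [momentumHessian_eq hbar k l h, momentumHessian_eq hbar l k h,
    h.isSymmSndFDerivAt (by simp [minSmoothness_of_isRCLikeNormedField])]

lemma momentumHessian_matOp (hbar : ℝ) (k l : Fin 3) (M : SpinMatrix)
    (h : ContDiffAt ℝ 2 ψ x) :
    momentumHessian hbar (matOp M ψ) x k l = M *ᵥ momentumHessian hbar ψ x k l := by
  have hev : pOp hbar l (matOp M ψ) =ᶠ[nhds x] matOp M (pOp hbar l ψ) := by
    filter_upwards [h.eventually (by simp)] with y hy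
    exact pOp_matOp hbar l M (hy.differentiableAt (by norm_num))
  rw [momentumHessian, hev.pOp_eq, pOp_matOp hbar k M (differentiableAt_pOp hbar l h)]
  rfl

lemma lap_eq_sum_momentumHessian (hbar : ℝ) (h : ContDiffAt ℝ 2 ψ x) :
    (-(hbar : ℂ) ^ 2) • lap ψ x = ∑ k, momentumHessian hbar ψ x k k := by
  simp [lap, Finset.smul_sum, fderiv_fderiv_apply h.differentiableAt_fderiv,
    momentumHessian_eq hbar _ _ h]

lemma dot_matOp_pOp_apply (hbar : ℝ) (A : Fin 3 → SpinMatrix) (φ : WaveFn)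
    (y : Fin 3 → ℝ) :
    dot (fun k => matOp (A k)) (pOp hbar) φ y = ∑ k, A k *ᵥ pOp hbar k φ y := by
  simp [dot, matOp, Finset.sum_apply]

lemma dot_matOp_pOp_apply_dot (hbar : ℝ) (A B : Fin 3 → SpinMatrix)
    (h : ContDiffAt ℝ 2 ψ x) :
    dot (fun k => matOp (A k)) (pOp hbar) (dot (fun l => matOp (B l)) (pOp hbar) ψ) x
      = ∑ k, ∑ l, (A k * B l) *ᵥ momentumHessian hbar ψ x k l := by
  have hsum : dot (fun l => matOp (B l)) (pOp hbar) ψ = ∑ l, matOp (B l) (pOp hbar l ψ) := by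
    funext y
    simp [dot_matOp_pOp_apply, matOp, Finset.sum_apply]
  rw [dot_matOp_pOp_apply, hsum]
  refine Finset.sum_congr rfl fun k _ => ?_
  rw [pOp_sum hbar k _ _ fun l _ => (differentiableAt_pOp hbar l h).matOp (B l), mulVec_sum]
  refine Finset.sum_congr rfl fun l _ => ?_
  rw [pOp_matOp hbar k (B l) (differentiableAt_pOp hbar l h), mulVec_mulVec]
  rfl

end Momentum

/-- `Y₃₀` in the notation of the paper. -/
def spinMomentum (hbar : ℝ) : Op := ((1 : ℂ)/2) • dot sigmaSum (pOp hbar)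

section SpinMomentumSquare

variable {ψ : WaveFn} {x : Fin 3 → ℝ}

lemma spinMomentum_sq_apply (hbar : ℝ) (h : ContDiffAt ℝ 2 ψ x) :
    (spinMomentum hbar ∘ spinMomentum hbar) ψ x
      = ((1 : ℂ)/4) • ∑ k, ∑ l,
          (spinTotal k * spinTotal l) *ᵥ momentumHessian hbar ψ x k l := by
  rw [spinMomentum, sigmaSum_eq_matOp, smul_dot_matOp, Function.comp_apply,
    dot_matOp_pOp_apply_dot _ _ _ h]
  simp only [smul_mul_smul_comm, smul_mulVec, Finset.smul_sum]
  norm_num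

lemma spinMomentum_sq_apply_eq_kinetic (hbar : ℝ) (h : ContDiffAt ℝ 2 ψ x) :
    (spinMomentum hbar ∘ spinMomentum hbar) ψ x
      = ((1 : ℂ)/2) • (∑ k, momentumHessian hbar ψ x k k
          + ∑ k, ∑ l, (pauli k ⊗ₖ pauli l) *ᵥ momentumHessian hbar ψ x k l) := by
  rw [spinMomentum_sq_apply hbar h,
    sum_spinTotal_mul_spinTotal_mulVec _ fun k l => momentumHessian_symm hbar k l h]
  module

lemma spinMomentum_sq_apply_matOp_spinExchange_add_three (hbar : ℝ) (h : ContDiffAt ℝ 2 ψ x) :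
    (spinMomentum hbar ∘ spinMomentum hbar) (matOp (spinExchange + (3 : ℂ) • 1) ψ) x
      = (4 : ℂ) • (spinMomentum hbar ∘ spinMomentum hbar) ψ x := by
  rw [spinMomentum_sq_apply hbar (h.matOp _), spinMomentum_sq_apply hbar h]
  simp only [momentumHessian_matOp hbar _ _ _ h, mulVec_mulVec, mul_assoc,
    spinTotal_mul_spinExchange_add_three, mul_smul_comm, smul_mulVec, ← Finset.smul_sum]
  module

end SpinMomentumSquare

lemma Ham_exchange_apply {ψ : WaveFn} {x : Fin 3 → ℝ} (hbar : ℝ) (V₀ : ℝ → ℝ)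
    (d₉ : ℝ) (h : ContDiffAt ℝ 2 ψ x) :
    Ham hbar V₀ (fun _ => 0) (fun r => d₉ - V₀ r) (fun _ => 0) (fun _ => 1 / 2) (fun _ => 0)
        ψ x
      = ((1 : ℂ)/2) • (∑ k, momentumHessian hbar ψ x k k
          + ∑ k, ∑ l, (pauli k ⊗ₖ pauli l) *ᵥ momentumHessian hbar ψ x k l)
        + (V₀ (rfun x) : ℂ) • ψ x
        + ((d₉ : ℂ) - V₀ (rfun x)) • (spinExchange *ᵥ ψ x) := by
  have hlap : (-(hbar ^ 2 / 2) : ℂ) • lap ψ x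
      = ((1 : ℂ)/2) • ∑ k, momentumHessian hbar ψ x k k := by
    rw [← lap_eq_sum_momentumHessian hbar h, smul_smul]
    ring_nf
  simp only [Ham, mulR, Pi.add_apply, Pi.smul_apply, Function.comp_apply, Complex.ofReal_zero,
    zero_smul, smul_zero, add_zero, hlap, KOp_eq_matOp, matOp, sigma1_eq_matOp, sigma2_eq_matOp,
    dot_matOp_pOp_apply_dot hbar _ _ h, ← mul_kronecker_mul, Matrix.mul_one, Matrix.one_mul]
  push_cast
  module

theorem statement8_general (hbar : ℝ) (V₀ : ℝ → ℝ) (d₉ : ℝ)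
    (ψ : WaveFn) (hψ : ContDiffOn ℝ (⊤ : ℕ∞) ψ {x : Fin 3 → ℝ | x ≠ 0})
    (x : Fin 3 → ℝ) (hx : x ≠ 0) :
    ((((1 : ℂ)/2) • dot sigmaSum (pOp hbar)) ∘ (((1 : ℂ)/2) • dot sigmaSum (pOp hbar))) ψ x
      =
    (((1 : ℂ)/4) •
      ((Ham hbar V₀ (fun _ => 0) (fun r => d₉ - V₀ r) (fun _ => 0)
          (fun _ => 1 / 2) (fun _ => 0) - (d₉ : ℂ) • idOp)
        ∘ (KOp + (3 : ℂ) • idOp))) ψ x := by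
  have h : ContDiffAt ℝ 2 ψ x :=
    (hψ.contDiffAt (isOpen_ne.mem_nhds hx)).of_le (WithTop.coe_le_coe.2 le_top)
  set φ := matOp (spinExchange + (3 : ℂ) • 1) ψ
  have hφ : ContDiffAt ℝ 2 φ x := h.matOp _
  have hKφ : spinExchange *ᵥ φ x = φ x := by
    simp only [φ, matOp, mulVec_mulVec, spinExchange_mul_spinExchange_add_three]
  change (spinMomentum hbar ∘ spinMomentum hbar) ψ x = _
  conv_rhs =>
    simp only [Pi.smul_apply, Function.comp_apply, Pi.sub_apply, KOp_add_three_smul_idOp, idOp]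
    rw [Ham_exchange_apply hbar V₀ d₉ hφ, hKφ, ← spinMomentum_sq_apply_eq_kinetic hbar hφ,
      spinMomentum_sq_apply_matOp_spinExchange_add_three hbar h]
  module

/-- with `H = −(ħ²/2)Δ + V₀(r) + (d₉ − V₀(r))K + ½(σ₁,p)(σ₂,p)` and
`Y₃₀ = ½(σ₁+σ₂,p)`, the identity `(Y₃₀)² = ¼(H − d₉)(K + 3)` holds. -/
theorem statement8 (hbar : ℝ) (hhbar : hbar ≠ 0) (V₀ : ℝ → ℝ) (d₉ : ℝ)
    (hV₀ : ContDiffOn ℝ (⊤ : ℕ∞) V₀ (Set.Ioi (0 : ℝ)))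
    (ψ : WaveFn) (hψ : ContDiffOn ℝ (⊤ : ℕ∞) ψ {x : Fin 3 → ℝ | x ≠ 0})
    (x : Fin 3 → ℝ) (hx : x ≠ 0) :
    ((((1 : ℂ)/2) • dot sigmaSum (pOp hbar)) ∘ (((1 : ℂ)/2) • dot sigmaSum (pOp hbar))) ψ x
      =
    (((1 : ℂ)/4) •
      ((Ham hbar V₀ (fun _ => 0) (fun r => d₉ - V₀ r) (fun _ => 0)
          (fun _ => 1 / 2) (fun _ => 0) - (d₉ : ℂ) • idOp)
        ∘ (KOp + (3 : ℂ) • idOp))) ψ x :=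
  statement8_general hbar V₀ d₉ ψ hψ x hx
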